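/- arXiv:1407.2722 — 6 statements merged into one kernel-verified Lean document; each statement's English description precedes it below -/
import Mathlib

section
/- Let n ≥ 1, let δ_1,...,δ_n be positive reals and θ_1,...,θ_n be nonzero reals. Define H_m = ∑_{k|m} δ_k² for m = 1,...,n, and let T be the n×n matrix with T_{i,j} = δ_i θ_j if i | j and 0 otherwise. Then the matrix A with entries A_{i,j} = θ_i θ_j H_{gcd(i,j)} satisfies A = Tᵗ T, and A is positive definite. -/
/-!
Writing `D` for the matrix with `D i j = δ i θ j` when `i ∣ j` and `0` otherwise, the entry
`(Dᵀ D) i j = θ i θ j ∑_{k ∣ i, k ∣ j} δ k ²` is `θ i θ j H (gcd i j)` because the common divisors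
of `i` and `j` are the divisors of their gcd. Since `k ∣ j` forces `k ≤ j`, `D` is upper triangular
with diagonal `δ i θ i ≠ 0`, hence invertible, so `Dᵀ D` is positive definite.
-/

open Matrix

/-- Row and column `i : Fin n` stand for the integer `i + 1`. -/
def divisibilityMatrix {R : Type*} [Mul R] [Zero R] {n : ℕ} (a b : Fin n → R) :
    Matrix (Fin n) (Fin n) R :=
  of fun i j => if ((i : ℕ) + 1) ∣ ((j : ℕ) + 1) then a i * b j else 0

section divisibilityMatrix

variable {R : Type*} {n : ℕ}

theorem divisibilityMatrix_isUpperTriangular [Mul R] [Zero R] (a b : Fin n → R) :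
    (divisibilityMatrix a b).IsUpperTriangular := by
  intro i j hji
  refine if_neg fun hdvd => not_le.mpr hji (Fin.le_def.mpr ?_)
  exact Nat.le_of_add_le_add_right (Nat.le_of_dvd j.succ_pos hdvd)

theorem det_divisibilityMatrix [CommRing R] (a b : Fin n → R) :
    (divisibilityMatrix a b).det = ∏ i, a i * b i := by
  rw [det_of_isUpperTriangular (divisibilityMatrix_isUpperTriangular a b)]
  exact Finset.prod_congr rfl fun i _ => if_pos dvd_rfl

theorem transpose_divisibilityMatrix_mul_self_apply [CommSemiring R] (a b : Fin n → R)
    (i j : Fin n) :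
    ((divisibilityMatrix a b)ᵀ * divisibilityMatrix a b) i j =
      b i * b j * ∑ k : Fin n,
        if ((k : ℕ) + 1) ∣ Nat.gcd ((i : ℕ) + 1) ((j : ℕ) + 1) then a k ^ 2 else 0 := by
  rw [mul_apply, Finset.mul_sum]
  refine Finset.sum_congr rfl fun k _ => ?_
  simp only [transpose_apply, divisibilityMatrix, of_apply, Nat.dvd_gcd_iff]
  by_cases hki : ((k : ℕ) + 1) ∣ ((i : ℕ) + 1) <;> by_cases hkj : ((k : ℕ) + 1) ∣ ((j : ℕ) + 1) <;>
    simp only [hki, hkj, and_self, and_false, false_and, if_true, if_false, mul_zero, zero_mul]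
  ring

theorem posDef_transpose_divisibilityMatrix_mul_self {a b : Fin n → ℝ}
    (hab : ∀ i, a i * b i ≠ 0) :
    ((divisibilityMatrix a b)ᵀ * divisibilityMatrix a b).PosDef := by
  have hdet : (divisibilityMatrix a b).det ≠ 0 := by
    rw [det_divisibilityMatrix]
    exact Finset.prod_ne_zero_iff.mpr fun i _ => hab i
  simpa only [conjTranspose_eq_transpose_of_trivial] using
    PosDef.conjTranspose_mul_self _ (mulVec_injective_of_det_ne_zero hdet)

end divisibilityMatrix

theorem gcd_matrix_factorization_posdef_general (n : ℕ) (δ θ : Fin n → ℝ)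
    (hδ : ∀ i, 0 < δ i) (hθ : ∀ i, θ i ≠ 0)
    (H : ℕ → ℝ) (hH : ∀ m : ℕ, H m = ∑ i : Fin n, if ((i : ℕ) + 1) ∣ m then δ i ^ 2 else 0)
    (T : Matrix (Fin n) (Fin n) ℝ)
    (hT : ∀ i j, T i j = if ((i : ℕ) + 1) ∣ ((j : ℕ) + 1) then δ i * θ j else 0)
    (A : Matrix (Fin n) (Fin n) ℝ)
    (hA : ∀ i j, A i j = θ i * θ j * H (Nat.gcd ((i : ℕ) + 1) ((j : ℕ) + 1))) :
    A = T.transpose * T ∧ A.PosDef := by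
  have hT' : T = divisibilityMatrix δ θ := ext fun i j => hT i j
  have hfactor : A = T.transpose * T :=
    ext fun i j => by rw [hA, hH, hT', transpose_divisibilityMatrix_mul_self_apply]
  refine ⟨hfactor, ?_⟩
  rw [hfactor, hT']
  exact posDef_transpose_divisibilityMatrix_mul_self fun i => mul_ne_zero (hδ i).ne' (hθ i)

theorem gcd_matrix_factorization_posdef (n : ℕ) (hn : 1 ≤ n) (δ θ : Fin n → ℝ)
    (hδ : ∀ i, 0 < δ i) (hθ : ∀ i, θ i ≠ 0)
    (H : ℕ → ℝ) (hH : ∀ m : ℕ, H m = ∑ i : Fin n, if ((i : ℕ) + 1) ∣ m then δ i ^ 2 else 0)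
    (T : Matrix (Fin n) (Fin n) ℝ)
    (hT : ∀ i j, T i j = if ((i : ℕ) + 1) ∣ ((j : ℕ) + 1) then δ i * θ j else 0)
    (A : Matrix (Fin n) (Fin n) ℝ)
    (hA : ∀ i j, A i j = θ i * θ j * H (Nat.gcd ((i : ℕ) + 1) ((j : ℕ) + 1))) :
    A = T.transpose * T ∧ A.PosDef :=
  gcd_matrix_factorization_posdef_general n δ θ hδ hθ H hH T hT A hA
end

section
/- Let s > 1/2, let K be a finite nonempty set of positive integers, and let (c_k)_{k∈K} be real numbers. For every ε with 0 < ε ≤ 2s − 1, ∑_{k,ℓ∈K} c_k c_ℓ gcd(k,ℓ)^{2s}/(k^s ℓ^s) ≤ ((1+ε)/ε) ∑_{k∈K} c_k² σ_{1+ε−2s}(k), where σ_h(n) = ∑_{d|n} d^h. -/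
/-!
Weighting by `w k = k ^ (1 + ε - s)`, the AM-GM inequality `2 c_k c_l ≤ c_k² w_k/w_l + c_l² w_l/w_k`
(the Schur test) bounds the quadratic form by `∑ c_k² k^(1+ε-2s) ∑_l gcd(k,l)^(2s) l^(-(1+ε))`.
Grouping `l` by `g = gcd(k,l)` and writing `l = g m`, the inner sum is at most
`ζ(1+ε) ∑_{g ∣ k} g^(2s-1-ε)` with `ζ(1+ε) ≤ 1 + 1/ε` by comparison with an integral, and
`k^(1+ε-2s) ∑_{g ∣ k} g^(2s-1-ε) = σ_{1+ε-2s}(k)` via `g ↦ k/g`.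
-/

open Finset Real

theorem sum_Icc_natCast_rpow_neg_le {p : ℝ} (hp : 0 < p) (N : ℕ) :
    ∑ m ∈ Icc 1 N, (m : ℝ) ^ (-(1 + p)) ≤ 1 + 1 / p := by
  rcases N.eq_zero_or_pos with rfl | hN
  · rw [Icc_eq_empty_of_lt zero_lt_one, sum_empty]
    positivity
  have hanti : AntitoneOn (fun x : ℝ ↦ x ^ (-(1 + p))) (Set.Icc ((1 : ℕ) : ℝ) N) :=
    fun x hx y _ hxy ↦
      rpow_le_rpow_of_nonpos (zero_lt_one.trans_le (mod_cast hx.1)) hxy (by linarith)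
  have htail := hanti.sum_Ico_le_integral
    (integrableOn_Ioi_rpow_of_lt (by linarith) (by norm_num))
    fun t ht ↦ rpow_nonneg (zero_lt_one.trans (mod_cast ht)).le _
  rw [integral_Ioi_rpow_of_lt (by linarith) (by norm_num),
    sum_Ico_add' (fun n : ℕ ↦ (n : ℝ) ^ (-(1 + p))), Ico_add_one_add_one_eq_Ioc] at htail
  rw [Nat.cast_one, one_rpow, show -(1 + p) + 1 = -p by ring, neg_div_neg_eq] at htail
  rw [← add_sum_Ioc_eq_sum_Icc hN, Nat.cast_one, one_rpow]
  linarith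

theorem sum_natCast_rpow_neg_le {p : ℝ} (hp : 0 < p) {L : Finset ℕ} (hL : ∀ m ∈ L, 0 < m) :
    ∑ m ∈ L, (m : ℝ) ^ (-(1 + p)) ≤ 1 + 1 / p := by
  refine le_trans (sum_le_sum_of_subset_of_nonneg (t := Icc 1 (L.sup id)) ?_ ?_)
    (sum_Icc_natCast_rpow_neg_le hp _)
  · exact fun m hm ↦ mem_Icc.2 ⟨hL m hm, le_sup (f := id) hm⟩
  · exact fun m _ _ ↦ rpow_nonneg m.cast_nonneg _

theorem sum_filter_dvd_natCast_rpow_neg_le {p : ℝ} (hp : 0 < p) {L : Finset ℕ}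
    (hL : ∀ m ∈ L, 0 < m) {g : ℕ} (hg : 0 < g) :
    ∑ l ∈ L with g ∣ l, (l : ℝ) ^ (-(1 + p)) ≤ (1 + 1 / p) * (g : ℝ) ^ (-(1 + p)) := by
  have hsplit : ∀ l ∈ L.filter (g ∣ ·), (l : ℝ) ^ (-(1 + p)) =
      (g : ℝ) ^ (-(1 + p)) * ((l / g : ℕ) : ℝ) ^ (-(1 + p)) := by
    intro l hl
    rw [← mul_rpow (by positivity) (by positivity), ← Nat.cast_mul,
      Nat.mul_div_cancel' (mem_filter.1 hl).2]
  have hinj : Set.InjOn (· / g) (L.filter (g ∣ ·) : Set ℕ) := fun a ha b hb hab ↦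
    Nat.div_left_inj (mem_filter.1 ha).2 (mem_filter.1 hb).2 |>.1 hab
  rw [sum_congr rfl hsplit, ← mul_sum,
    ← sum_image (f := fun m : ℕ ↦ (m : ℝ) ^ (-(1 + p))) hinj, mul_comm]
  gcongr
  refine sum_natCast_rpow_neg_le hp fun m hm ↦ ?_
  obtain ⟨l, hl, rfl⟩ := mem_image.1 hm
  obtain ⟨hlL, hgl⟩ := mem_filter.1 hl
  exact Nat.div_pos (Nat.le_of_dvd (hL l hlL) hgl) hg

theorem sum_gcd_rpow_mul_rpow_neg_le {p : ℝ} (hp : 0 < p) (a : ℝ) {L : Finset ℕ}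
    (hL : ∀ m ∈ L, 0 < m) {k : ℕ} (hk : 0 < k) :
    ∑ l ∈ L, (k.gcd l : ℝ) ^ a * (l : ℝ) ^ (-(1 + p))
      ≤ (1 + 1 / p) * ∑ g ∈ k.divisors, (g : ℝ) ^ (a - (1 + p)) := by
  rw [← sum_fiberwise_of_maps_to (t := k.divisors) (g := k.gcd)
    fun l _ ↦ Nat.mem_divisors.2 ⟨Nat.gcd_dvd_left k l, hk.ne'⟩, mul_sum]
  refine sum_le_sum fun g hg ↦ ?_
  have hg0 : 0 < g := Nat.pos_of_mem_divisors hg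
  calc ∑ l ∈ L with k.gcd l = g, (k.gcd l : ℝ) ^ a * (l : ℝ) ^ (-(1 + p))
      = (g : ℝ) ^ a * ∑ l ∈ L with k.gcd l = g, (l : ℝ) ^ (-(1 + p)) := by
        rw [mul_sum]
        exact sum_congr rfl fun l hl ↦ by rw [(mem_filter.1 hl).2]
    _ ≤ (g : ℝ) ^ a * ∑ l ∈ L with g ∣ l, (l : ℝ) ^ (-(1 + p)) := by
        gcongr with l
        rintro rfl
        exact Nat.gcd_dvd_right k l
    _ ≤ (g : ℝ) ^ a * ((1 + 1 / p) * (g : ℝ) ^ (-(1 + p))) := by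
        gcongr
        exact sum_filter_dvd_natCast_rpow_neg_le hp hL hg0
    _ = (1 + 1 / p) * (g : ℝ) ^ (a - (1 + p)) := by
        rw [sub_eq_add_neg, rpow_add (by exact_mod_cast hg0)]
        ring

theorem rpow_mul_sum_divisors_rpow_neg (k : ℕ) (r : ℝ) :
    (k : ℝ) ^ r * ∑ g ∈ k.divisors, (g : ℝ) ^ (-r) = ∑ d ∈ k.divisors, (d : ℝ) ^ r := by
  rw [← Nat.sum_div_divisors k (fun d ↦ (d : ℝ) ^ r), mul_sum]
  refine sum_congr rfl fun g hg ↦ ?_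
  rw [Nat.cast_div (Nat.dvd_of_mem_divisors hg)
      (by exact_mod_cast (Nat.pos_of_mem_divisors hg).ne'),
    div_rpow (Nat.cast_nonneg _) (Nat.cast_nonneg _), rpow_neg (Nat.cast_nonneg _), div_eq_mul_inv]

theorem sum_sum_mul_mul_le_schur_test {ι : Type*} (s : Finset ι) (c w : ι → ℝ)
    (hw : ∀ i ∈ s, 0 < w i) (A : ι → ι → ℝ) (hA : ∀ i ∈ s, ∀ j ∈ s, 0 ≤ A i j)
    (hA_symm : ∀ i j, A i j = A j i) :
    ∑ i ∈ s, ∑ j ∈ s, c i * c j * A i j ≤ ∑ i ∈ s, c i ^ 2 * ∑ j ∈ s, A i j * (w i / w j) := by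
  have hpoint : ∀ i ∈ s, ∀ j ∈ s, c i * c j * A i j ≤
      (c i ^ 2 * (A i j * (w i / w j)) + c j ^ 2 * (A j i * (w j / w i))) / 2 := by
    intro i hi j hj
    have hwi := hw i hi
    have hwj := hw j hj
    have hamgm : 2 * (c i * c j) ≤ c i ^ 2 * (w i / w j) + c j ^ 2 * (w j / w i) := by
      have hsq : c i ^ 2 * (w i / w j) + c j ^ 2 * (w j / w i) - 2 * (c i * c j)
          = (c i * w i - c j * w j) ^ 2 / (w i * w j) := by
        field_simp
        ring
      have : 0 ≤ (c i * w i - c j * w j) ^ 2 / (w i * w j) := by positivity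
      linarith
    rw [hA_symm j i]
    linarith [mul_le_mul_of_nonneg_left hamgm (hA i hi j hj)]
  calc ∑ i ∈ s, ∑ j ∈ s, c i * c j * A i j
      ≤ ∑ i ∈ s, ∑ j ∈ s,
          (c i ^ 2 * (A i j * (w i / w j)) + c j ^ 2 * (A j i * (w j / w i))) / 2 :=
        sum_le_sum fun i hi ↦ sum_le_sum fun j hj ↦ hpoint i hi j hj
    _ = ∑ i ∈ s, c i ^ 2 * ∑ j ∈ s, A i j * (w i / w j) := by
        simp only [← sum_div, sum_add_distrib, ← mul_sum]
        rw [sum_comm (f := fun i j ↦ c j ^ 2 * (A j i * (w j / w i)))]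
        simp only [← mul_sum]
        ring

noncomputable def gcdKernel (s : ℝ) (k l : ℕ) : ℝ :=
  (k.gcd l : ℝ) ^ (2 * s) / ((k : ℝ) ^ s * (l : ℝ) ^ s)

theorem gcdKernel_comm (s : ℝ) (k l : ℕ) : gcdKernel s k l = gcdKernel s l k := by
  rw [gcdKernel, gcdKernel, Nat.gcd_comm, mul_comm ((k : ℝ) ^ s)]

theorem gcdKernel_nonneg (s : ℝ) (k l : ℕ) : 0 ≤ gcdKernel s k l := by
  unfold gcdKernel
  positivity

theorem gcdKernel_mul_rpow_div_rpow {s p : ℝ} {k l : ℕ} (hk : 0 < k) (hl : 0 < l) :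
    gcdKernel s k l * ((k : ℝ) ^ (1 + p - s) / (l : ℝ) ^ (1 + p - s))
      = (k : ℝ) ^ (1 + p - 2 * s) * ((k.gcd l : ℝ) ^ (2 * s) * (l : ℝ) ^ (-(1 + p))) := by
  have hk0 : (0 : ℝ) < k := Nat.cast_pos.2 hk
  have hl0 : (0 : ℝ) < l := Nat.cast_pos.2 hl
  have hks : (k : ℝ) ^ s ≠ 0 := (rpow_pos_of_pos hk0 s).ne'
  have hk' : (k : ℝ) ^ (1 + p - s) = (k : ℝ) ^ (1 + p - 2 * s) * (k : ℝ) ^ s := by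
    rw [← rpow_add hk0]; ring_nf
  have hl' : (l : ℝ) ^ (-(1 + p)) = ((l : ℝ) ^ s * (l : ℝ) ^ (1 + p - s))⁻¹ := by
    rw [← rpow_add hl0, ← rpow_neg hl0.le]; ring_nf
  rw [gcdKernel, hk', hl']
  field_simp

theorem sum_gcdKernel_mul_rpow_div_rpow_le (s : ℝ) {p : ℝ} (hp : 0 < p) {L : Finset ℕ}
    (hL : ∀ m ∈ L, 0 < m) {k : ℕ} (hk : 0 < k) :
    ∑ l ∈ L, gcdKernel s k l * ((k : ℝ) ^ (1 + p - s) / (l : ℝ) ^ (1 + p - s))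
      ≤ (1 + p) / p * ∑ d ∈ k.divisors, (d : ℝ) ^ (1 + p - 2 * s) := by
  rw [sum_congr rfl fun l hl ↦ gcdKernel_mul_rpow_div_rpow hk (hL l hl), ← mul_sum,
    show (1 + p) / p = 1 + 1 / p by field_simp; ring, ← rpow_mul_sum_divisors_rpow_neg, neg_sub,
    mul_left_comm]
  gcongr
  exact sum_gcd_rpow_mul_rpow_neg_le hp _ hL hk

theorem gcd_sum_le_sigma_bound_general (s : ℝ) (K : Finset ℕ)
    (hpos : ∀ k ∈ K, 0 < k) (c : ℕ → ℝ) (ε : ℝ) (hε : 0 < ε) :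
    ∑ k ∈ K, ∑ l ∈ K,
        c k * c l * (Nat.gcd k l : ℝ) ^ (2 * s) / ((k : ℝ) ^ s * (l : ℝ) ^ s)
      ≤ ((1 + ε) / ε) * ∑ k ∈ K, (c k) ^ 2 * ∑ d ∈ k.divisors, (d : ℝ) ^ (1 + ε - 2 * s) := by
  calc ∑ k ∈ K, ∑ l ∈ K,
        c k * c l * (Nat.gcd k l : ℝ) ^ (2 * s) / ((k : ℝ) ^ s * (l : ℝ) ^ s)
      = ∑ k ∈ K, ∑ l ∈ K, c k * c l * gcdKernel s k l := by simp only [gcdKernel, mul_div_assoc]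
    _ ≤ ∑ k ∈ K, c k ^ 2 * ∑ l ∈ K,
          gcdKernel s k l * ((k : ℝ) ^ (1 + ε - s) / (l : ℝ) ^ (1 + ε - s)) :=
        sum_sum_mul_mul_le_schur_test K c _
          (fun k hk ↦ rpow_pos_of_pos (Nat.cast_pos.2 (hpos k hk)) _) _
          (fun k _ l _ ↦ gcdKernel_nonneg s k l) (gcdKernel_comm s)
    _ ≤ ∑ k ∈ K, c k ^ 2 * ((1 + ε) / ε * ∑ d ∈ k.divisors, (d : ℝ) ^ (1 + ε - 2 * s)) := by
        gcongr with k hk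
        exact sum_gcdKernel_mul_rpow_div_rpow_le s hε hpos (hpos k hk)
    _ = ((1 + ε) / ε) * ∑ k ∈ K, (c k) ^ 2 * ∑ d ∈ k.divisors, (d : ℝ) ^ (1 + ε - 2 * s) := by
        rw [mul_sum]
        exact sum_congr rfl fun k _ ↦ by ring

theorem gcd_sum_le_sigma_bound (s : ℝ) (hs : 1 / 2 < s) (K : Finset ℕ) (hK : K.Nonempty)
    (hpos : ∀ k ∈ K, 0 < k) (c : ℕ → ℝ) (ε : ℝ) (hε : 0 < ε) (hε2 : ε ≤ 2 * s - 1) :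
    ∑ k ∈ K, ∑ l ∈ K,
        c k * c l * (Nat.gcd k l : ℝ) ^ (2 * s) / ((k : ℝ) ^ s * (l : ℝ) ^ s)
      ≤ ((1 + ε) / ε) * ∑ k ∈ K, (c k) ^ 2 * ∑ d ∈ k.divisors, (d : ℝ) ^ (1 + ε - 2 * s) :=
  gcd_sum_le_sigma_bound_general s K hpos c ε hε
end

section
/- Let s > 0, 0 ≤ τ ≤ 2s, let K be a finite set of positive integers and (c_k)_{k∈K} real numbers. Let F(K) = {d ≥ 1 : d divides some k ∈ K}. Then ∑_{k,ℓ∈K} c_k c_ℓ gcd(k,ℓ)^{2s}/(k^s ℓ^s) ≤ (∑_{u∈F(K)} 1/σ_τ(u)) · (∑_{ν∈K} c_ν² σ_{τ−2s}(ν)), where σ_h(n) = ∑_{d|n} d^h. -/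
/-!
Write `gcd(k, l)^{2s} = ∑_{u ∣ gcd(k, l)} J(u)` with the Jordan function `J = μ * id^{2s}`, which
is multiplicative and nonnegative for `s > 0` since `J(p^{k+1}) = p^{2s(k+1)} - p^{2sk}`. The
quadratic form becomes `∑_{u ∈ F(K)} J(u) A(u)^2` with `A(u) = ∑_{k ∈ K, u ∣ k} c_k k^{-s}`.
Cauchy–Schwarz with weights `σ_τ(k/u)` bounds `A(u)^2` by
`(∑_{u ∣ k} 1/σ_τ(k/u)) · (∑_{u ∣ k} c_k² k^{-2s} σ_τ(k/u))`; the first factor is at most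
`∑_{m ∈ F(K)} 1/σ_τ(m)` because `k ↦ k/u` maps the multiples of `u` in `K` injectively into `F(K)`,
and summing the second one against `J(u)` gives `∑_k c_k² σ_{τ-2s}(k)`, since
`J * σ_τ = id^{2s} * id^τ`.
-/

open Finset ArithmeticFunction

namespace ArithmeticFunction

open scoped ArithmeticFunction.zeta ArithmeticFunction.Moebius

noncomputable def rpow (h : ℝ) : ArithmeticFunction ℝ :=
  ⟨fun n => if n = 0 then 0 else (n : ℝ) ^ h, if_pos rfl⟩

theorem rpow_apply {h : ℝ} {n : ℕ} (hn : n ≠ 0) : rpow h n = (n : ℝ) ^ h := if_neg hn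

theorem isMultiplicative_rpow (h : ℝ) : (rpow h).IsMultiplicative := by
  refine IsMultiplicative.iff_ne_zero.2 ⟨by simp [rpow_apply], fun {m n} hm hn _ => ?_⟩
  rw [rpow_apply (mul_ne_zero hm hn), rpow_apply hm, rpow_apply hn, Nat.cast_mul,
    Real.mul_rpow m.cast_nonneg n.cast_nonneg]

theorem rpow_mul_rpow_apply (h τ : ℝ) {n : ℕ} (hn : n ≠ 0) :
    (rpow h * rpow τ) n = (n : ℝ) ^ h * ∑ d ∈ n.divisors, (d : ℝ) ^ (τ - h) := by
  rw [mul_apply, Nat.sum_divisorsAntidiagonal' (fun a b => rpow h a * rpow τ b), mul_sum]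
  refine sum_congr rfl fun d hd => ?_
  obtain ⟨hdn, -⟩ := Nat.mem_divisors.1 hd
  have hd : d ≠ 0 := (Nat.pos_of_mem_divisors hd).ne'
  have hd0 : (0 : ℝ) < d := Nat.cast_pos.2 (Nat.pos_of_ne_zero hd)
  rw [rpow_apply ((Nat.div_ne_zero_iff_of_dvd hdn).2 ⟨hn, hd⟩), rpow_apply hd,
    Nat.cast_div hdn hd0.ne',
    Real.div_rpow n.cast_nonneg hd0.le, Real.rpow_sub hd0]
  field_simp

noncomputable def jordan (h : ℝ) : ArithmeticFunction ℝ := (μ : ArithmeticFunction ℝ) * rpow h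

theorem isMultiplicative_jordan (h : ℝ) : (jordan h).IsMultiplicative :=
  isMultiplicative_moebius.intCast.mul (isMultiplicative_rpow h)

theorem jordan_mul_zeta (h : ℝ) : jordan h * ζ = rpow h := by
  rw [jordan, mul_right_comm, coe_moebius_mul_coe_zeta, one_mul]

theorem sum_divisors_jordan (h : ℝ) {n : ℕ} (hn : n ≠ 0) :
    ∑ d ∈ n.divisors, jordan h d = (n : ℝ) ^ h := by
  rw [← coe_mul_zeta_apply, jordan_mul_zeta, rpow_apply hn]

theorem apply_prime_pow_succ_of_mul_zeta_eq {R : Type*} [Ring R] {f g : ArithmeticFunction R}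
    (hfg : f * ζ = g) {p : ℕ} (hp : p.Prime) (k : ℕ) :
    f (p ^ (k + 1)) = g (p ^ (k + 1)) - g (p ^ k) := by
  rw [← hfg, coe_mul_zeta_apply, coe_mul_zeta_apply, Nat.sum_divisors_prime_pow hp,
    Nat.sum_divisors_prime_pow hp, sum_range_succ, add_sub_cancel_left]

theorem IsMultiplicative.nonneg_of_prime_pow {R : Type*} [CommSemiring R] [PartialOrder R]
    [IsOrderedRing R] {f : ArithmeticFunction R} (hf : f.IsMultiplicative)
    (hpow : ∀ p k : ℕ, p.Prime → 0 ≤ f (p ^ k)) (n : ℕ) : 0 ≤ f n := by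
  rcases eq_or_ne n 0 with rfl | hn
  · simp
  rw [hf.multiplicative_factorization f hn]
  exact prod_nonneg fun p hp => hpow p _ (Nat.prime_of_mem_primeFactors hp)

theorem jordan_nonneg {h : ℝ} (hh : 0 ≤ h) (n : ℕ) : 0 ≤ jordan h n := by
  refine (isMultiplicative_jordan h).nonneg_of_prime_pow (fun p k hp => ?_) n
  cases k with
  | zero => simp [(isMultiplicative_jordan h).map_one]
  | succ k =>
    rw [apply_prime_pow_succ_of_mul_zeta_eq (jordan_mul_zeta h) hp,
      rpow_apply (pow_ne_zero _ hp.ne_zero), rpow_apply (pow_ne_zero _ hp.ne_zero), sub_nonneg]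
    gcongr
    · exact_mod_cast hp.one_lt.le
    · omega

theorem sum_divisors_jordan_mul_sum_divisors_rpow (h τ : ℝ) {n : ℕ} (hn : n ≠ 0) :
    ∑ u ∈ n.divisors, jordan h u * ∑ d ∈ (n / u).divisors, (d : ℝ) ^ τ
      = (n : ℝ) ^ h * ∑ d ∈ n.divisors, (d : ℝ) ^ (τ - h) := by
  have hconv : jordan h * (ζ * rpow τ) = rpow h * rpow τ := by
    rw [← mul_assoc, jordan_mul_zeta]
  rw [← rpow_mul_rpow_apply h τ hn, ← hconv, mul_apply,
    Nat.sum_divisorsAntidiagonal (fun a b => jordan h a * (ζ * rpow τ) b)]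
  refine sum_congr rfl fun u _ => ?_
  rw [coe_zeta_mul_apply]
  congr 1
  exact sum_congr rfl fun d hd => (rpow_apply (Nat.pos_of_mem_divisors hd).ne').symm

end ArithmeticFunction

theorem sum_divisors_rpow_pos (τ : ℝ) {n : ℕ} (hn : n ≠ 0) :
    0 < ∑ d ∈ n.divisors, (d : ℝ) ^ τ :=
  sum_pos (fun _ hd => Real.rpow_pos_of_pos (Nat.cast_pos.2 (Nat.pos_of_mem_divisors hd)) τ)
    ⟨1, Nat.one_mem_divisors.2 hn⟩

theorem div_rpow_sq_mul_rpow_two_mul (c : ℝ) {a : ℝ} (ha : 0 < a) (s : ℝ) :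
    (c / a ^ s) ^ 2 * a ^ (2 * s) = c ^ 2 := by
  rw [mul_comm 2 s, Real.rpow_mul ha.le, Real.rpow_two, ← mul_pow,
    div_mul_cancel₀ _ (Real.rpow_pos_of_pos ha s).ne']

section DivisorClosure

variable {K : Finset ℕ}

theorem sum_biUnion_divisors_sum_filter_dvd {M : Type*} [AddCommMonoid M]
    (hK : ∀ k ∈ K, k ≠ 0) (φ : ℕ → ℕ → M) :
    ∑ u ∈ K.biUnion Nat.divisors, ∑ k ∈ K with u ∣ k, φ u k = ∑ k ∈ K, ∑ u ∈ k.divisors, φ u k :=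
  sum_comm' fun u k => by
    simp only [mem_biUnion, mem_filter, Nat.mem_divisors]
    exact ⟨fun ⟨_, hk, hu⟩ => ⟨⟨hu, hK k hk⟩, hk⟩, fun ⟨⟨hu, _⟩, hk⟩ => ⟨⟨k, hk, hu, hK k hk⟩, hk, hu⟩⟩

theorem sum_sum_mul_sum_divisors_gcd {R : Type*} [CommSemiring R] (hK : ∀ k ∈ K, k ≠ 0)
    (g x : ℕ → R) :
    ∑ k ∈ K, ∑ l ∈ K, x k * x l * ∑ u ∈ (k.gcd l).divisors, g u
      = ∑ u ∈ K.biUnion Nat.divisors, g u * (∑ k ∈ K with u ∣ k, x k) ^ 2 := by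
  have hmem : ∀ u (p : ℕ × ℕ), u ∈ K.biUnion Nat.divisors ∧
      p ∈ {k ∈ K | u ∣ k} ×ˢ {k ∈ K | u ∣ k} ↔ u ∈ (p.1.gcd p.2).divisors ∧ p ∈ K ×ˢ K := by
    intro u p
    simp only [mem_biUnion, mem_product, mem_filter, Nat.mem_divisors, Nat.dvd_gcd_iff]
    constructor
    · rintro ⟨-, ⟨hk, huk⟩, hl, hul⟩
      exact ⟨⟨⟨huk, hul⟩, Nat.gcd_ne_zero_left (hK _ hk)⟩, hk, hl⟩
    · rintro ⟨⟨⟨huk, hul⟩, -⟩, hk, hl⟩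
      exact ⟨⟨p.1, hk, huk, hK _ hk⟩, ⟨hk, huk⟩, hl, hul⟩
  calc ∑ k ∈ K, ∑ l ∈ K, x k * x l * ∑ u ∈ (k.gcd l).divisors, g u
      = ∑ p ∈ K ×ˢ K, ∑ u ∈ (p.1.gcd p.2).divisors, g u * (x p.1 * x p.2) := by
        simp only [sum_product, mul_sum, mul_comm]
    _ = ∑ u ∈ K.biUnion Nat.divisors, ∑ p ∈ {k ∈ K | u ∣ k} ×ˢ {k ∈ K | u ∣ k},
          g u * (x p.1 * x p.2) := (sum_comm' hmem).symm
    _ = ∑ u ∈ K.biUnion Nat.divisors, g u * (∑ k ∈ K with u ∣ k, x k) ^ 2 := by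
        refine sum_congr rfl fun u _ => ?_
        rw [sq, sum_mul_sum, ← sum_product', mul_sum]

theorem sum_filter_dvd_div_le {f : ℕ → ℝ} (hK : ∀ k ∈ K, k ≠ 0)
    (hf : ∀ m ∈ K.biUnion Nat.divisors, 0 ≤ f m) (u : ℕ) :
    ∑ k ∈ K with u ∣ k, f (k / u) ≤ ∑ m ∈ K.biUnion Nat.divisors, f m := by
  have hinj : Set.InjOn (· / u) ({k ∈ K | u ∣ k} : Finset ℕ) := fun k hk l hl hkl => by
    rw [← Nat.div_mul_cancel (mem_filter.1 hk).2, ← Nat.div_mul_cancel (mem_filter.1 hl).2]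
    exact congrArg (· * u) hkl
  have hsub : {k ∈ K | u ∣ k}.image (· / u) ⊆ K.biUnion Nat.divisors := by
    simp only [subset_iff, mem_image, mem_filter, mem_biUnion, Nat.mem_divisors]
    rintro _ ⟨k, ⟨hk, huk⟩, rfl⟩
    exact ⟨k, hk, Nat.div_dvd_of_dvd huk, hK k hk⟩
  rw [← sum_image hinj]
  exact sum_le_sum_of_subset_of_nonneg hsub fun m hm _ => hf m hm

theorem sq_sum_filter_dvd_le {w : ℕ → ℝ} (hK : ∀ k ∈ K, k ≠ 0) (hw : ∀ n, n ≠ 0 → 0 < w n)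
    (x : ℕ → ℝ) (u : ℕ) :
    (∑ k ∈ K with u ∣ k, x k) ^ 2
      ≤ (∑ m ∈ K.biUnion Nat.divisors, 1 / w m) * ∑ k ∈ K with u ∣ k, x k ^ 2 * w (k / u) := by
  have hwpos : ∀ k ∈ {k ∈ K | u ∣ k}, 0 < w (k / u) := fun k hk => by
    obtain ⟨hk, huk⟩ := mem_filter.1 hk
    exact hw _ ((Nat.div_ne_zero_iff_of_dvd huk).2 ⟨hK k hk, ne_zero_of_dvd_ne_zero (hK k hk) huk⟩)
  have hdual : ∑ k ∈ K with u ∣ k, 1 / w (k / u) ≤ ∑ m ∈ K.biUnion Nat.divisors, 1 / w m := by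
    refine sum_filter_dvd_div_le (f := fun m => 1 / w m) hK (fun m hm => ?_) u
    obtain ⟨_, _, hm⟩ := mem_biUnion.1 hm
    exact (one_div_pos.2 (hw m (Nat.pos_of_mem_divisors hm).ne')).le
  calc (∑ k ∈ K with u ∣ k, x k) ^ 2
      ≤ (∑ k ∈ K with u ∣ k, 1 / w (k / u)) * ∑ k ∈ K with u ∣ k, x k ^ 2 * w (k / u) :=
        sum_sq_le_sum_mul_sum_of_sq_le_mul _ (fun k hk => (one_div_pos.2 (hwpos k hk)).le)
          (fun k hk => mul_nonneg (sq_nonneg _) (hwpos k hk).le)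
          fun k hk => (by field_simp [(hwpos k hk).ne'] : _ = _).le
    _ ≤ _ := mul_le_mul_of_nonneg_right hdual
        (sum_nonneg fun k hk => mul_nonneg (sq_nonneg _) (hwpos k hk).le)

end DivisorClosure

theorem gcd_sum_le_FC_sigma_bound_general (s τ : ℝ) (hs : 0 < s)
    (K : Finset ℕ) (hpos : ∀ k ∈ K, 0 < k) (c : ℕ → ℝ) :
    ∑ k ∈ K, ∑ l ∈ K,
        c k * c l * (Nat.gcd k l : ℝ) ^ (2 * s) / ((k : ℝ) ^ s * (l : ℝ) ^ s)
      ≤ (∑ u ∈ K.biUnion Nat.divisors, 1 / ∑ d ∈ u.divisors, (d : ℝ) ^ τ)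
          * ∑ ν ∈ K, (c ν) ^ 2 * ∑ d ∈ ν.divisors, (d : ℝ) ^ (τ - 2 * s) := by
  have hK : ∀ k ∈ K, k ≠ 0 := fun k hk => (hpos k hk).ne'
  set x : ℕ → ℝ := fun k => c k / (k : ℝ) ^ s
  set σ : ℝ → ℕ → ℝ := fun h n => ∑ d ∈ n.divisors, (d : ℝ) ^ h
  calc ∑ k ∈ K, ∑ l ∈ K, c k * c l * (k.gcd l : ℝ) ^ (2 * s) / ((k : ℝ) ^ s * (l : ℝ) ^ s)
      = ∑ k ∈ K, ∑ l ∈ K, x k * x l * ∑ u ∈ (k.gcd l).divisors, jordan (2 * s) u := by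
        refine sum_congr rfl fun k hk => sum_congr rfl fun l _ => ?_
        rw [sum_divisors_jordan _ (Nat.gcd_ne_zero_left (hK k hk))]
        ring
    _ = ∑ u ∈ K.biUnion Nat.divisors, jordan (2 * s) u * (∑ k ∈ K with u ∣ k, x k) ^ 2 :=
        sum_sum_mul_sum_divisors_gcd hK _ _
    _ ≤ ∑ u ∈ K.biUnion Nat.divisors, jordan (2 * s) u *
          ((∑ m ∈ K.biUnion Nat.divisors, 1 / σ τ m) *
            ∑ k ∈ K with u ∣ k, x k ^ 2 * σ τ (k / u)) := by
        gcongr with u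
        · exact jordan_nonneg (by positivity) u
        · exact sq_sum_filter_dvd_le hK (fun _ => sum_divisors_rpow_pos τ) x u
    _ = (∑ m ∈ K.biUnion Nat.divisors, 1 / σ τ m) *
          ∑ k ∈ K, x k ^ 2 * ∑ u ∈ k.divisors, jordan (2 * s) u * σ τ (k / u) := by
        simp only [mul_sum, ← sum_biUnion_divisors_sum_filter_dvd hK]
        refine sum_congr rfl fun u _ => sum_congr rfl fun k _ => ?_
        ring
    _ = (∑ m ∈ K.biUnion Nat.divisors, 1 / σ τ m) * ∑ k ∈ K, c k ^ 2 * σ (τ - 2 * s) k := by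
        congr 1
        refine sum_congr rfl fun k hk => ?_
        rw [sum_divisors_jordan_mul_sum_divisors_rpow _ _ (hK k hk), ← mul_assoc,
          div_rpow_sq_mul_rpow_two_mul _ (Nat.cast_pos.2 (hpos k hk))]

theorem gcd_sum_le_FC_sigma_bound (s τ : ℝ) (hs : 0 < s) (hτ0 : 0 ≤ τ) (hτ : τ ≤ 2 * s)
    (K : Finset ℕ) (hpos : ∀ k ∈ K, 0 < k) (c : ℕ → ℝ) :
    ∑ k ∈ K, ∑ l ∈ K,
        c k * c l * (Nat.gcd k l : ℝ) ^ (2 * s) / ((k : ℝ) ^ s * (l : ℝ) ^ s)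
      ≤ (∑ u ∈ K.biUnion Nat.divisors, 1 / ∑ d ∈ u.divisors, (d : ℝ) ^ τ)
          * ∑ ν ∈ K, (c ν) ^ 2 * ∑ d ∈ ν.divisors, (d : ℝ) ^ (τ - 2 * s) :=
  gcd_sum_le_FC_sigma_bound_general s τ hs K hpos c
end

section
/- Let K be a finite set of positive integers with minimum K₋ and maximum K₊, and fix k ∈ K. Then ∑_{ℓ∈K, ℓ≠k} gcd(k,ℓ)²/(kℓ) ≤ 2 log(K₊/K₋) · σ_{−1}(k), where σ_{−1}(k) = ∑_{d|k} 1/d. -/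
/-!
Write `g = gcd(k, l)`. Then `g² / (k l) = (g / k) (g / l) ≤ ∑_{d ∣ g} (d / k) (d / l)`, and after
swapping the sums it suffices to bound, for each `d ∣ k`, the sum of `d / l` over the `l ∈ K \ {k}`
divisible by `d`. The quotients `l / d` are distinct integers in `[K₋ / d, K₊ / d]` avoiding
`k / d`, so this is at most a harmonic sum over that range with one term missing, hence at most
`2 log (K₊ / K₋)`. Finally `∑_{d ∣ k} d / k = σ_{-1}(k)`.
-/

open Finset Real

lemma inv_le_two_mul_log_succ_sub_log {m : ℕ} (hm : 0 < m) :
    (m : ℝ)⁻¹ ≤ 2 * (log (m + 1) - log m) := by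
  have hm' : (0 : ℝ) < m := by exact_mod_cast hm
  have hlog := one_sub_inv_le_log_of_pos (x := ((m : ℝ) + 1) / m) (by positivity)
  rw [log_div (by positivity) hm'.ne', inv_div] at hlog
  have hsucc : (m : ℝ)⁻¹ ≤ 2 * (1 - m / (m + 1)) := by
    have : (1 : ℝ) ≤ m := by exact_mod_cast hm
    rw [one_sub_div (by positivity), add_sub_cancel_left, inv_le_iff_one_le_mul₀ hm',
      mul_one_div, div_mul_eq_mul_div, one_le_div (by positivity)]
    linarith
  linarith

lemma sum_Ico_inv_le_two_mul_log {A B : ℕ} (hA : 0 < A) (hAB : A ≤ B) :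
    ∑ m ∈ Ico A B, (m : ℝ)⁻¹ ≤ 2 * log (B / A) := by
  have hA' : (0 : ℝ) < A := by exact_mod_cast hA
  have hB' : (0 : ℝ) < B := by exact_mod_cast hA.trans_le hAB
  calc ∑ m ∈ Ico A B, (m : ℝ)⁻¹
      ≤ ∑ m ∈ Ico A B, 2 * (log ((m + 1 : ℕ) : ℝ) - log (m : ℝ)) :=
        sum_le_sum fun m hm => by
          push_cast
          exact inv_le_two_mul_log_succ_sub_log (hA.trans_le (mem_Ico.mp hm).1)
    _ = 2 * log (B / A) := by
        rw [← mul_sum, sum_Ico_sub (fun m : ℕ => log (m : ℝ)) hAB, log_div hB'.ne' hA'.ne']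

lemma sum_inv_le_two_mul_log_of_notMem {T : Finset ℕ} {A B m₀ : ℕ} (hA : 0 < A)
    (hT : T ⊆ Icc A B) (hm₀ : m₀ ∈ Icc A B) (hm₀T : m₀ ∉ T) :
    ∑ m ∈ T, (m : ℝ)⁻¹ ≤ 2 * log (B / A) := by
  obtain ⟨hAm₀, hm₀B⟩ := mem_Icc.mp hm₀
  have hAB := hAm₀.trans hm₀B
  -- The missing term `1 / m₀` pays for the top term `1 / B`, which `Ico A B` leaves out.
  have hinv : (B : ℝ)⁻¹ ≤ (m₀ : ℝ)⁻¹ :=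
    inv_anti₀ (by exact_mod_cast hA.trans_le hAm₀) (by exact_mod_cast hm₀B)
  calc ∑ m ∈ T, (m : ℝ)⁻¹
      ≤ ∑ m ∈ (Icc A B).erase m₀, (m : ℝ)⁻¹ :=
        sum_le_sum_of_subset_of_nonneg
          (fun m hm => mem_erase.mpr ⟨ne_of_mem_of_not_mem hm hm₀T, hT hm⟩)
          fun _ _ _ => by positivity
    _ = ∑ m ∈ Ico A B, (m : ℝ)⁻¹ + ((B : ℝ)⁻¹ - (m₀ : ℝ)⁻¹) := by
        rw [sum_erase_eq_sub hm₀, ← Ico_add_one_right_eq_Icc, sum_Ico_succ_top hAB]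
        ring
    _ ≤ ∑ m ∈ Ico A B, (m : ℝ)⁻¹ := by linarith
    _ ≤ 2 * log (B / A) := sum_Ico_inv_le_two_mul_log hA hAB

lemma sum_inv_le_two_mul_log_of_notMem_Icc {T : Finset ℕ} {a b : ℝ} {m₀ : ℕ} (ha : 0 < a)
    (hT : ∀ m ∈ T, (m : ℝ) ∈ Set.Icc a b) (hm₀ : (m₀ : ℝ) ∈ Set.Icc a b) (hm₀T : m₀ ∉ T) :
    ∑ m ∈ T, (m : ℝ)⁻¹ ≤ 2 * log (b / a) := by
  have hA : 0 < ⌈a⌉₊ := Nat.ceil_pos.mpr ha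
  have hround : ∀ m : ℕ, (m : ℝ) ∈ Set.Icc a b → m ∈ Icc ⌈a⌉₊ ⌊b⌋₊ := fun m hm =>
    mem_Icc.mpr ⟨Nat.ceil_le.mpr hm.1, Nat.le_floor hm.2⟩
  have hb : 0 ≤ b := ha.le.trans (hm₀.1.trans hm₀.2)
  have hm₀' := mem_Icc.mp (hround m₀ hm₀)
  have hB : (0 : ℝ) < ⌊b⌋₊ := by exact_mod_cast hA.trans_le (hm₀'.1.trans hm₀'.2)
  calc ∑ m ∈ T, (m : ℝ)⁻¹ ≤ 2 * log (⌊b⌋₊ / ⌈a⌉₊) :=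
        sum_inv_le_two_mul_log_of_notMem hA (fun m hm => hround m (hT m hm)) (hround m₀ hm₀) hm₀T
    _ ≤ 2 * log (b / a) := by
        have := Nat.floor_le hb
        have := Nat.le_ceil a
        gcongr

lemma sum_div_le_two_mul_log_of_dvd {S : Finset ℕ} {a b : ℝ} {d k : ℕ} (ha : 0 < a)
    (hd : d ≠ 0) (hS : ∀ l ∈ S, d ∣ l ∧ (l : ℝ) ∈ Set.Icc a b)
    (hk : d ∣ k ∧ (k : ℝ) ∈ Set.Icc a b) (hkS : k ∉ S) :
    ∑ l ∈ S, (d : ℝ) / l ≤ 2 * log (b / a) := by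
  have hd' : (d : ℝ) ≠ 0 := Nat.cast_ne_zero.mpr hd
  have hcast : ∀ l : ℕ, d ∣ l → ((l / d : ℕ) : ℝ) = l / d := fun l hdl => Nat.cast_div hdl hd'
  have hscaled : ∀ l : ℕ, d ∣ l → (l : ℝ) ∈ Set.Icc a b →
      ((l / d : ℕ) : ℝ) ∈ Set.Icc (a / d) (b / d) := fun l hdl hl => by
    rw [hcast l hdl]
    exact ⟨by gcongr; exact hl.1, by gcongr; exact hl.2⟩
  have hinj : Set.InjOn (· / d) S := fun x hx y hy h =>
    (Nat.div_left_inj (hS x hx).1 (hS y hy).1).mp h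
  have hkS' : k / d ∉ S.image (· / d) := by
    intro hmem
    obtain ⟨l, hl, hlk⟩ := mem_image.mp hmem
    exact hkS ((Nat.div_left_inj (hS l hl).1 hk.1).mp hlk ▸ hl)
  rw [← div_div_div_cancel_right₀ hd' b a]
  calc ∑ l ∈ S, (d : ℝ) / l = ∑ m ∈ S.image (· / d), (m : ℝ)⁻¹ := by
        rw [sum_image hinj]
        refine sum_congr rfl fun l hl => ?_
        rw [hcast l (hS l hl).1, inv_div]
    _ ≤ 2 * log (b / d / (a / d)) := by
        refine sum_inv_le_two_mul_log_of_notMem_Icc (by positivity) (fun m hm => ?_)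
          (hscaled k hk.1 hk.2) hkS'
        obtain ⟨l, hl, rfl⟩ := mem_image.mp hm
        exact hscaled l (hS l hl).1 (hS l hl).2

lemma sq_gcd_div_mul_le_sum_divisors {k : ℕ} (hk : k ≠ 0) (l : ℕ) :
    (Nat.gcd k l : ℝ) ^ 2 / (k * l) ≤
      ∑ d ∈ k.divisors, if d ∣ l then (d : ℝ) / k * (d / l) else 0 := by
  have hg : Nat.gcd k l ∈ k.divisors := Nat.mem_divisors.mpr ⟨Nat.gcd_dvd_left k l, hk⟩
  have hle := single_le_sum (f := fun d => if d ∣ l then (d : ℝ) / k * (d / l) else 0)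
    (fun d _ => by positivity) hg
  rw [sq, ← div_mul_div_comm]
  simpa only [Nat.gcd_dvd_right, if_true] using hle

lemma sum_divisors_div_self (k : ℕ) :
    ∑ d ∈ k.divisors, (d : ℝ) / k = ∑ d ∈ k.divisors, (d : ℝ)⁻¹ := by
  rw [← Nat.sum_div_divisors k (fun d => (d : ℝ)⁻¹)]
  refine sum_congr rfl fun d hd => ?_
  have hd0 : (d : ℝ) ≠ 0 := Nat.cast_ne_zero.mpr (Nat.pos_of_mem_divisors hd).ne'
  rw [Nat.cast_div (Nat.dvd_of_mem_divisors hd) hd0, inv_div]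

theorem gcd_row_sum_bound (K : Finset ℕ) (hK : K.Nonempty) (hpos : ∀ k ∈ K, 0 < k)
    (k : ℕ) (hk : k ∈ K) :
    ∑ l ∈ K.erase k, (Nat.gcd k l : ℝ) ^ 2 / ((k : ℝ) * (l : ℝ))
      ≤ 2 * Real.log ((K.max' hK : ℝ) / (K.min' hK : ℝ)) * ∑ d ∈ k.divisors, (d : ℝ)⁻¹ := by
  set L := 2 * log ((K.max' hK : ℝ) / (K.min' hK : ℝ))
  have hmin : (0 : ℝ) < K.min' hK := by exact_mod_cast hpos _ (K.min'_mem hK)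
  have hbounds : ∀ l ∈ K, (l : ℝ) ∈ Set.Icc (K.min' hK : ℝ) (K.max' hK) := fun l hl =>
    ⟨by exact_mod_cast K.min'_le l hl, by exact_mod_cast K.le_max' l hl⟩
  have hmultiples : ∀ d ∈ k.divisors, ∑ l ∈ (K.erase k).filter (d ∣ ·), (d : ℝ) / l ≤ L :=
    fun d hd => sum_div_le_two_mul_log_of_dvd hmin (Nat.pos_of_mem_divisors hd).ne'
      (fun l hl => ⟨(mem_filter.mp hl).2, hbounds l (mem_of_mem_erase (mem_filter.mp hl).1)⟩)
      ⟨Nat.dvd_of_mem_divisors hd, hbounds k hk⟩ (by simp)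
  calc ∑ l ∈ K.erase k, (Nat.gcd k l : ℝ) ^ 2 / ((k : ℝ) * (l : ℝ))
      ≤ ∑ l ∈ K.erase k, ∑ d ∈ k.divisors, if d ∣ l then (d : ℝ) / k * (d / l) else 0 :=
        sum_le_sum fun l _ => sq_gcd_div_mul_le_sum_divisors (hpos k hk).ne' l
    _ = ∑ d ∈ k.divisors, (d : ℝ) / k * ∑ l ∈ (K.erase k).filter (d ∣ ·), (d : ℝ) / l := by
        rw [sum_comm]
        simp only [mul_sum, sum_filter, mul_ite, mul_zero]
    _ ≤ ∑ d ∈ k.divisors, (d : ℝ) / k * L :=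
        sum_le_sum fun d hd => mul_le_mul_of_nonneg_left (hmultiples d hd) (by positivity)
    _ = L * ∑ d ∈ k.divisors, (d : ℝ)⁻¹ := by
        rw [← sum_mul, sum_divisors_div_self, mul_comm]
end

section
/- Let J ≥ 1 be a real number, s > 0, and let k, ℓ be positive integers. If there exist positive integers i, h with i ≤ J, h ≤ J and hk = iℓ, then gcd(k,ℓ) ≥ max(k,ℓ)/J; moreover in that case ∑_{1≤i,h≤J, hk=iℓ} 1/(ih) ≤ ζ(2) · gcd(k,ℓ)²/(kℓ). -/
open Real in
theorem truncated_dilate_inner_bound (J : ℝ) (hJ : 1 ≤ J) (s : ℝ) (hs : 0 < s)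
    (k l : ℕ) (hk : 0 < k) (hl : 0 < l)
    (hex : ∃ i h : ℕ, 0 < i ∧ 0 < h ∧ (i : ℝ) ≤ J ∧ (h : ℝ) ≤ J ∧ h * k = i * l) :
    ((max k l : ℕ) : ℝ) / J ≤ (Nat.gcd k l : ℝ) ∧
    ∑ p ∈ (Finset.Icc 1 ⌊J⌋₊ ×ˢ Finset.Icc 1 ⌊J⌋₊).filter (fun p => p.2 * k = p.1 * l),
        1 / ((p.1 : ℝ) * (p.2 : ℝ))
      ≤ (π ^ 2 / 6) * (Nat.gcd k l : ℝ) ^ 2 / ((k : ℝ) * (l : ℝ)) := by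
  set d := Nat.gcd k l with hd
  have hdpos : 0 < d := Nat.gcd_pos_of_pos_left l hk
  set k' := k / d with hk'
  set l' := l / d with hl'
  have hkd : k = d * k' := (Nat.div_mul_cancel (Nat.gcd_dvd_left k l)).symm.trans (Nat.mul_comm _ _)
  have hld : l = d * l' := (Nat.div_mul_cancel (Nat.gcd_dvd_right k l)).symm.trans (Nat.mul_comm _ _)
  have hk'pos : 0 < k' := Nat.div_pos (Nat.le_of_dvd hk (Nat.gcd_dvd_left k l)) hdpos
  have hl'pos : 0 < l' := Nat.div_pos (Nat.le_of_dvd hl (Nat.gcd_dvd_right k l)) hdpos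
  have hcop : Nat.Coprime k' l' := Nat.coprime_div_gcd_div_gcd hdpos
  have hJ0 : 0 < J := lt_of_lt_of_le one_pos hJ
  -- structure of solutions
  have struct : ∀ i h : ℕ, 0 < i → 0 < h → h * k = i * l →
      ∃ u : ℕ, 0 < u ∧ i = u * k' ∧ h = u * l' := by
    intro i h hi hh heq
    rw [hkd, hld] at heq
    have heq' : h * k' = i * l' := by
      have : d * (h * k') = d * (i * l') := by ring_nf; ring_nf at heq; linarith
      exact Nat.eq_of_mul_eq_mul_left hdpos this
    have hdvd : k' ∣ i := by
      have : k' ∣ i * l' := ⟨h, by linarith [heq']⟩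
      exact (Nat.Coprime.dvd_of_dvd_mul_right hcop this)
    obtain ⟨u, hu⟩ := hdvd
    refine ⟨u, ?_, by rw [hu, Nat.mul_comm], ?_⟩
    · rcases Nat.eq_zero_or_pos u with h0 | h0
      · exfalso; rw [h0, Nat.mul_zero] at hu; exact hi.ne' hu
      · exact h0
    · have : h * k' = (u * l') * k' := by rw [heq', hu]; ring
      exact Nat.eq_of_mul_eq_mul_right hk'pos this
  obtain ⟨i, h, hi, hh, hiJ, hhJ, heq⟩ := hex
  obtain ⟨u, hu, hik, hhl⟩ := struct i h hi hh heq
  constructor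
  · -- first part
    rw [div_le_iff₀ hJ0]
    have h1 : (k : ℝ) ≤ d * J := by
      have : (k' : ℝ) ≤ J := le_trans (by exact_mod_cast Nat.le_of_dvd hi ⟨u, by rw [hik]; ring⟩) hiJ
      calc (k : ℝ) = d * k' := by exact_mod_cast hkd
        _ ≤ d * J := by apply mul_le_mul_of_nonneg_left this (by positivity)
    have h2 : (l : ℝ) ≤ d * J := by
      have : (l' : ℝ) ≤ J := le_trans (by exact_mod_cast Nat.le_of_dvd hh ⟨u, by rw [hhl]; ring⟩) hhJ
      calc (l : ℝ) = d * l' := by exact_mod_cast hld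
        _ ≤ d * J := by apply mul_le_mul_of_nonneg_left this (by positivity)
    rcases max_cases k l with ⟨hm, _⟩ | ⟨hm, _⟩ <;> rw [hm]
    · exact_mod_cast h1
    · exact_mod_cast h2
  · -- second part
    set N := ⌊J⌋₊ with hN
    have hsub : (Finset.Icc 1 N ×ˢ Finset.Icc 1 N).filter (fun p => p.2 * k = p.1 * l)
        ⊆ (Finset.Icc 1 N).image (fun u => (u * k', u * l')) := by
      intro p hp
      simp only [Finset.mem_filter, Finset.mem_product, Finset.mem_Icc] at hp
      obtain ⟨⟨⟨h11, h12⟩, h21, h22⟩, hpe⟩ := hp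
      obtain ⟨v, hv, hv1, hv2⟩ := struct p.1 p.2 (by omega) (by omega) hpe
      simp only [Finset.mem_image, Finset.mem_Icc]
      refine ⟨v, ⟨hv, ?_⟩, ?_⟩
      · calc v ≤ v * k' := Nat.le_mul_of_pos_right v hk'pos
          _ = p.1 := hv1.symm
          _ ≤ N := h12
      · ext <;> simp [hv1, hv2]
    have hnonneg : ∀ p : ℕ × ℕ, 0 ≤ 1 / ((p.1 : ℝ) * (p.2 : ℝ)) := by
      intro p; positivity
    calc ∑ p ∈ (Finset.Icc 1 N ×ˢ Finset.Icc 1 N).filter (fun p => p.2 * k = p.1 * l),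
          1 / ((p.1 : ℝ) * (p.2 : ℝ))
        ≤ ∑ p ∈ (Finset.Icc 1 N).image (fun u => (u * k', u * l')),
          1 / ((p.1 : ℝ) * (p.2 : ℝ)) :=
          Finset.sum_le_sum_of_subset_of_nonneg hsub (fun p _ _ => hnonneg p)
      _ = ∑ u ∈ Finset.Icc 1 N, 1 / (((u * k' : ℕ) : ℝ) * ((u * l' : ℕ) : ℝ)) := by
          apply Finset.sum_image
          intro a _ b _ hab
          have := (Prod.mk.injEq _ _ _ _).mp hab
          exact Nat.eq_of_mul_eq_mul_right hk'pos this.1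
      _ = (1 / ((k' : ℝ) * l')) * ∑ u ∈ Finset.Icc 1 N, 1 / ((u : ℝ)) ^ 2 := by
          rw [Finset.mul_sum]
          apply Finset.sum_congr rfl
          intro u hu
          simp only [Finset.mem_Icc] at hu
          have hu0 : (0:ℝ) < u := by exact_mod_cast hu.1
          push_cast
          field_simp
      _ ≤ (1 / ((k' : ℝ) * l')) * (π ^ 2 / 6) := by
          apply mul_le_mul_of_nonneg_left _ (by positivity)
          apply sum_le_hasSum _ _ hasSum_zeta_two
          intro n _; positivity
      _ = (π ^ 2 / 6) * (d : ℝ) ^ 2 / ((k : ℝ) * (l : ℝ)) := by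
          rw [hkd, hld]
          push_cast
          have : (d:ℝ) ≠ 0 := by positivity
          field_simp
end

section
/- Let s > 1/2, 0 < ε < 1/2, and let k, ℓ be positive integers and J ≥ 1 a real number. Then ∑_{i,j > J, jk = iℓ} 1/(ij) ≤ C · J^{−ε} · (gcd(k,ℓ)²/(kℓ))^{1−ε/2} for an absolute constant C; more precisely ∑_{i,j>J, jk=iℓ} 1/(ij) ≤ C·min(gcd(k,ℓ)/(max(k,ℓ)·J), gcd(k,ℓ)²/(kℓ)). -/
/-!
Write `k = a g`, `l = b g` with `g = gcd k l` and `a, b` coprime. The solutions of `j k = i l`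
are then exactly `(u a, u b)`, and `i, j > J` becomes `u > J / min a b`, so the sum equals
`(a b)⁻¹ ∑_{u > J / min a b} u⁻²`; the tail bound `∑_{u > T} u⁻² ≤ 2 min (T⁻¹, 1)` gives the
first estimate. For the second, interpolate `min A B ≤ A ^ ε B ^ (1 - ε)` and use `(A J)² ≤ B`.
-/

open Finset

theorem tsum_inv_sq_of_lt_le {T : ℝ} (hT : 0 ≤ T) :
    ∑' u : {u : ℕ | T < u}, ((u : ℝ) ^ 2)⁻¹ ≤ 2 / (⌊T⌋₊ + 1) := by
  rw [_root_.tsum_subtype {u : ℕ | T < u} fun u : ℕ => ((u : ℝ) ^ 2)⁻¹]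
  refine Real.tsum_le_of_sum_range_le
    (fun u => Set.indicator_nonneg (fun _ _ => by positivity) u) fun n => ?_
  calc ∑ u ∈ range n, {u : ℕ | T < u}.indicator (fun u => ((u : ℝ) ^ 2)⁻¹) u
      = ∑ u ∈ (range n).filter (fun u : ℕ => T < u), ((u : ℝ) ^ 2)⁻¹ := by
        rw [sum_filter]; rfl
    _ ≤ ∑ u ∈ Ioo ⌊T⌋₊ n, ((u : ℝ) ^ 2)⁻¹ := by
        refine sum_le_sum_of_subset_of_nonneg (fun u hu => ?_) fun _ _ _ => by positivity
        simp only [mem_filter, mem_range] at hu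
        exact mem_Ioo.2 ⟨(Nat.floor_lt hT).2 hu.2, hu.1⟩
    _ ≤ 2 / (⌊T⌋₊ + 1) := sum_Ioo_inv_sq_le _ _

theorem tsum_inv_sq_of_lt_le_two_mul_min {T : ℝ} (hT : 0 < T) :
    ∑' u : {u : ℕ | T < u}, ((u : ℝ) ^ 2)⁻¹ ≤ 2 * min T⁻¹ 1 := by
  refine (tsum_inv_sq_of_lt_le hT.le).trans ?_
  rw [div_eq_mul_inv]
  gcongr
  refine le_min ?_ ?_
  · exact inv_anti₀ hT (Nat.lt_floor_add_one T).le
  · exact inv_le_one_of_one_le₀ (by simp)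

theorem Nat.Coprime.mul_eq_mul_iff_exists {a b i j : ℕ} (hab : a.Coprime b) (ha : 0 < a) :
    j * a = i * b ↔ ∃ u, i = u * a ∧ j = u * b := by
  constructor
  · intro h
    obtain ⟨u, rfl⟩ : a ∣ i := hab.dvd_of_dvd_mul_right ⟨j, by rw [← h, mul_comm]⟩
    refine ⟨u, mul_comm _ _, Nat.eq_of_mul_eq_mul_right ha ?_⟩
    rw [h]; ring
  · rintro ⟨u, rfl, rfl⟩
    ring

theorem setOf_solutions_eq_image {a b g : ℕ} (hab : a.Coprime b) (ha : 0 < a) (hb : 0 < b)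
    (hg : 0 < g) (J : ℝ) :
    {p : ℕ × ℕ | J < p.1 ∧ J < p.2 ∧ p.2 * (a * g) = p.1 * (b * g)} =
      (fun u : ℕ => (u * a, u * b)) '' {u : ℕ | J / (min a b : ℕ) < u} := by
  have hmin : (0 : ℝ) < (min a b : ℕ) := by exact_mod_cast lt_min ha hb
  have hlt (u : ℕ) : J / (min a b : ℕ) < u ↔ J < (u * a : ℕ) ∧ J < (u * b : ℕ) := by
    rw [div_lt_iff₀ hmin, Nat.cast_min, mul_min_of_nonneg _ _ (Nat.cast_nonneg u), lt_min_iff]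
    push_cast
    rfl
  ext ⟨i, j⟩
  simp only [Set.mem_ofPred_eq, Set.mem_image, Prod.mk.injEq]
  rw [← mul_assoc, ← mul_assoc, Nat.mul_left_inj hg.ne', hab.mul_eq_mul_iff_exists ha]
  constructor
  · rintro ⟨hi, hj, u, rfl, rfl⟩
    exact ⟨u, (hlt u).2 ⟨hi, hj⟩, rfl, rfl⟩
  · rintro ⟨u, hu, rfl, rfl⟩
    exact ⟨((hlt u).1 hu).1, ((hlt u).1 hu).2, u, rfl, rfl⟩

theorem tsum_solutions_eq {a b g : ℕ} (hab : a.Coprime b) (ha : 0 < a) (hb : 0 < b)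
    (hg : 0 < g) (J : ℝ) :
    ∑' p : {p : ℕ × ℕ // J < p.1 ∧ J < p.2 ∧ p.2 * (a * g) = p.1 * (b * g)},
        1 / ((p.1.1 : ℝ) * p.1.2) =
      (∑' u : {u : ℕ | J / (min a b : ℕ) < u}, ((u : ℝ) ^ 2)⁻¹) / (a * b) := by
  have hinj : Set.InjOn (fun u : ℕ => (u * a, u * b)) {u : ℕ | J / (min a b : ℕ) < u} :=
    fun u _ v _ huv => Nat.eq_of_mul_eq_mul_right ha (Prod.ext_iff.1 huv).1
  refine (tsum_congr_set_coe (fun p : ℕ × ℕ => 1 / ((p.1 : ℝ) * p.2))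
    (setOf_solutions_eq_image hab ha hb hg J)).trans ?_
  rw [tsum_image (fun p : ℕ × ℕ => 1 / ((p.1 : ℝ) * p.2)) hinj, ← tsum_div_const]
  congr 1 with u
  push_cast
  field_simp

theorem Real.min_le_rpow_mul_rpow {x y ε : ℝ} (hx : 0 ≤ x) (hy : 0 ≤ y) (hε₀ : 0 ≤ ε)
    (hε₁ : ε ≤ 1) : min x y ≤ x ^ ε * y ^ (1 - ε) := by
  have hmin : 0 ≤ min x y := le_min hx hy
  calc min x y = min x y ^ ε * min x y ^ (1 - ε) := by
        rw [← Real.rpow_add' hmin (by norm_num), add_sub_cancel, Real.rpow_one]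
    _ ≤ x ^ ε * y ^ (1 - ε) := by
        gcongr
        · exact min_le_left x y
        · exact min_le_right x y

theorem Real.min_le_rpow_neg_mul_rpow_of_sq_le {A B J ε : ℝ} (hA : 0 ≤ A) (hJ : 0 < J)
    (hAB : (A * J) ^ 2 ≤ B) (hε₀ : 0 ≤ ε) (hε₁ : ε ≤ 1) :
    min A B ≤ J ^ (-ε) * B ^ (1 - ε / 2) := by
  have hB : 0 ≤ B := (sq_nonneg _).trans hAB
  have hAJ : 0 ≤ A * J := mul_nonneg hA hJ.le
  have hA_eq : A ^ ε = ((A * J) ^ 2) ^ (ε / 2) * J ^ (-ε) := by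
    rw [← Real.rpow_natCast, ← Real.rpow_mul hAJ, Real.mul_rpow hA hJ.le, mul_assoc,
      ← Real.rpow_add hJ]
    ring_nf
    rw [Real.rpow_zero, mul_one]
  calc min A B ≤ A ^ ε * B ^ (1 - ε) := Real.min_le_rpow_mul_rpow hA hB hε₀ hε₁
    _ ≤ B ^ (ε / 2) * J ^ (-ε) * B ^ (1 - ε) := by
        rw [hA_eq]
        gcongr
    _ = J ^ (-ε) * B ^ (1 - ε / 2) := by
        rw [mul_comm (B ^ _), mul_assoc, ← Real.rpow_add' hB (by linarith)]
        ring_nf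

theorem div_max_sq_le {x k l : ℝ} (hk : 0 < k) (hl : 0 < l) :
    (x / max k l) ^ 2 ≤ x ^ 2 / (k * l) := by
  rw [div_pow, sq (max k l)]
  gcongr
  exacts [le_max_left k l, le_max_right k l]

theorem tsum_solutions_le {a b g : ℕ} (hab : a.Coprime b) (ha : 0 < a) (hb : 0 < b)
    (hg : 0 < g) {J : ℝ} (hJ : 0 < J) :
    ∑' p : {p : ℕ × ℕ // J < p.1 ∧ J < p.2 ∧ p.2 * (a * g) = p.1 * (b * g)},
        1 / ((p.1.1 : ℝ) * p.1.2) ≤ 2 * min ((min a b : ℕ) / J) 1 / (a * b) := by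
  have hmin : (0 : ℝ) < (min a b : ℕ) := by exact_mod_cast lt_min ha hb
  rw [tsum_solutions_eq hab ha hb hg, ← inv_div J]
  gcongr
  exact tsum_inv_sq_of_lt_le_two_mul_min (div_pos hJ hmin)

theorem tail_dilate_inner_bound :
    ∃ C > (0 : ℝ), ∀ (s ε J : ℝ) (k l : ℕ),
      1 / 2 < s → 0 < ε → ε < 1 / 2 → 1 ≤ J → 0 < k → 0 < l →
      (∑' p : {p : ℕ × ℕ // J < ((p.1 : ℕ) : ℝ) ∧ J < ((p.2 : ℕ) : ℝ) ∧ p.2 * k = p.1 * l},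
          1 / (((p : ℕ × ℕ).1 : ℝ) * ((p : ℕ × ℕ).2 : ℝ))
        ≤ C * min ((Nat.gcd k l : ℝ) / (((max k l : ℕ) : ℝ) * J))
            ((Nat.gcd k l : ℝ) ^ 2 / ((k : ℝ) * (l : ℝ))))
      ∧ (∑' p : {p : ℕ × ℕ // J < ((p.1 : ℕ) : ℝ) ∧ J < ((p.2 : ℕ) : ℝ) ∧ p.2 * k = p.1 * l},
          1 / (((p : ℕ × ℕ).1 : ℝ) * ((p : ℕ × ℕ).2 : ℝ))
        ≤ C * J ^ (-ε) * ((Nat.gcd k l : ℝ) ^ 2 / ((k : ℝ) * (l : ℝ))) ^ (1 - ε / 2)) := by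
  refine ⟨2, two_pos, fun s ε J k l _ hε₀ hε₁ hJ hk hl => ?_⟩
  obtain ⟨g, a, b, hg, hab, rfl, rfl⟩ := Nat.exists_coprime' (Nat.gcd_pos_of_pos_left l hk)
  have ha : 0 < a := Nat.pos_of_mul_pos_right hk
  have hb : 0 < b := Nat.pos_of_mul_pos_right hl
  have hJ₀ : 0 < J := by linarith
  have hrhs : min ((min a b : ℕ) / J) 1 / (a * b : ℝ) =
      min (g / ((max (a * g) (b * g) : ℕ) * J)) (g ^ 2 / ((a * g : ℕ) * (b * g : ℕ))) := by
    rw [← min_div_div_right (by positivity)]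
    have hmax : ((max (a * g) (b * g) : ℕ) : ℝ) = max (a : ℝ) b * g := by
      push_cast; exact (max_mul_of_nonneg _ _ (Nat.cast_nonneg g)).symm
    have := min_mul_max (a : ℝ) b
    congr 1
    · rw [hmax, Nat.cast_min]; field_simp; linarith
    · push_cast; field_simp
  have hmain := tsum_solutions_le hab ha hb hg hJ₀
  rw [mul_div_assoc, hrhs] at hmain
  rw [Nat.gcd_mul_right, hab.gcd_eq_one, one_mul, mul_assoc]
  refine ⟨hmain, hmain.trans ?_⟩
  gcongr
  refine Real.min_le_rpow_neg_mul_rpow_of_sq_le (by positivity) hJ₀ ?_ hε₀.le (by linarith)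
  rw [div_mul_eq_div_div, div_mul_cancel₀ _ hJ₀.ne', Nat.cast_max]
  exact div_max_sq_le (by positivity) (by positivity)
end
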